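/- arXiv:1309.0536 — 2 statements merged into one kernel-verified Lean document; each statement's English description precedes it below -/
import Mathlib

section
/- Let L₁,…,L_l (l ≥ 2) be three-wise linearly independent linear forms in S = k[x₀,x₁,x₂], and let 𝕏(l) be the associated star configuration of binom(l,2) points. If a homogeneous form F of degree d vanishes on 𝕏(l) and d < l − 1, then F is divisible by each of the l linear forms L_i; consequently F = 0 whenever d < l − 1 and l > d + 1, i.e. no nonzero curve of degree d < l − 1 contains 𝕏(l). -/
open MvPolynomial Finset

/-- The (affine cone over the) vanishing ideal of a set `X ⊆ k³`: all polynomials in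
`k[x₀,x₁,x₂]` vanishing at every point of `X`. -/
def vanishingIdealOf {k : Type*} [Field k] (X : Set (Fin 3 → k)) :
    Ideal (MvPolynomial (Fin 3) k) where
  carrier := {F | ∀ v ∈ X, eval v F = 0}
  zero_mem' := by intro v _; simp
  add_mem' := by intro a b ha hb v hv; simp [ha v hv, hb v hv]
  smul_mem' := by intro c F hF v hv; simp [smul_eq_mul, hF v hv]

/-- The affine cone over the star configuration `𝕏(l)`: the set of nonzero vectors lying on
(at least) two of the lines `L_a = 0`, `L_b = 0` with `a ≠ b`. -/
def starCone {k : Type*} [Field k] {l : ℕ} (L : Fin l → MvPolynomial (Fin 3) k) :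
    Set (Fin 3 → k) :=
  {v | v ≠ 0 ∧ ∃ a b : Fin l, a ≠ b ∧ eval v (L a) = 0 ∧ eval v (L b) = 0}

/-!
Bezout for lines: the line `L i = 0` carries the `l - 1` points `c i ⨯₃ c j` of `𝕏(l)`, where
`c j` is the coefficient vector of `L j`, and three-wise independence makes them pairwise distinct.
Restricted to this line, `F` becomes a binary form of degree `d < l - 1` with `l - 1` distinct
zeros; it is divisible by the `l - 1` pairwise non-associated linear forms cutting out these
zeros, so it vanishes by a degree count. Hence `F` vanishes on the line, and `L i ∣ F` by the
Nullstellensatz. The same degree count, applied to the `l > d` pairwise non-associated linear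
forms `L i` dividing `F`, gives `F = 0`.
-/

open scoped Matrix

theorem linearIndependent_iff_det_ne_zero {K n : Type*} [Field K] [Fintype n] [DecidableEq n]
    {v : n → n → K} : LinearIndependent K v ↔ (Matrix.of v).det ≠ 0 := by
  rw [← isUnit_iff_ne_zero, ← Matrix.isUnit_iff_isUnit_det,
    ← Matrix.linearIndependent_rows_iff_isUnit]
  rfl

theorem exists_smul_eq_of_det_eq_zero {K : Type*} [Field K] {u x : Fin 2 → K} (hu : u ≠ 0)
    (h : (Matrix.of ![x, u]).det = 0) : ∃ a : K, a • u = x := by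
  by_contra! hx
  exact linearIndependent_iff_det_ne_zero.mp (linearIndependent_fin2.mpr ⟨hu, hx⟩) h

theorem linearIndependent_cross_cross {K : Type*} [Field K] {u v w : Fin 3 → K}
    (h : LinearIndependent K ![u, v, w]) : LinearIndependent K ![u ⨯₃ v, u ⨯₃ w] := by
  have hdet : u ⬝ᵥ v ⨯₃ w ≠ 0 := by
    rw [triple_product_eq_det]
    exact linearIndependent_iff_det_ne_zero.mp h
  refine LinearIndependent.pair_iff.mpr fun s t hst => ⟨?_, ?_⟩
  · have := congrArg (w ⬝ᵥ ·) hst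
    simp only [dotProduct_add, dotProduct_smul, dot_cross_self, dotProduct_zero, smul_eq_mul,
      mul_zero, add_zero] at this
    rw [← triple_product_permutation, ← triple_product_permutation] at this
    exact (mul_eq_zero.mp this).resolve_right hdet
  · have := congrArg (v ⬝ᵥ ·) hst
    simp only [dotProduct_add, dotProduct_smul, dot_cross_self, dotProduct_zero, smul_eq_mul,
      mul_zero, zero_add] at this
    rw [← cross_anticomm, dotProduct_neg, ← triple_product_permutation] at this
    simpa [hdet] using this

namespace MvPolynomial

section CommSemiring

variable {R σ : Type*} [CommSemiring R] {F : MvPolynomial σ R} {d : ℕ}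

theorem IsHomogeneous.eval_smul [Fintype σ] (hF : F.IsHomogeneous d) (t : R) (x : σ → R) :
    eval (t • x) F = t ^ d * eval x F := by
  simp only [eval_eq', Finset.mul_sum, Pi.smul_apply, smul_eq_mul, mul_pow,
    Finset.prod_mul_distrib, Finset.prod_pow_eq_pow_sum]
  refine Finset.sum_congr rfl fun m hm => ?_
  have hm : ∑ i, m i = d := by
    rw [← Finsupp.degree_eq_sum, Finsupp.degree_eq_weight_one]
    exact hF (mem_support_iff.mp hm)
  rw [hm]
  ring

theorem IsHomogeneous.exists_linearCombination_X_eq [Fintype σ] (hF : F.IsHomogeneous 1) :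
    ∃ c : σ → R, Fintype.linearCombination R X c = F := by
  rwa [← LinearMap.mem_range, Fintype.range_linearCombination,
    ← homogeneousSubmodule_one_eq_span_X]

theorem eval_linearCombination_X [Fintype σ] (c x : σ → R) :
    eval x (Fintype.linearCombination R X c) = c ⬝ᵥ x := by
  simp [Fintype.linearCombination_apply, dotProduct]

theorem IsHomogeneous.exists_eval_eq_eval_linearMap {τ : Type*} [Fintype τ] [DecidableEq τ]
    (hF : F.IsHomogeneous d) (φ : (τ → R) →ₗ[R] σ → R) :
    ∃ g : MvPolynomial τ R, g.IsHomogeneous d ∧ ∀ s, eval s g = eval (φ s) F := by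
  refine ⟨MvPolynomial.aeval (LinearMap.toMatrix' φ).toMvPolynomial F,
    one_mul d ▸ hF.aeval _ (Matrix.toMvPolynomial_isHomogeneous _), fun s => ?_⟩
  rw [aeval_eq_bind₁, eval, eval₂Hom_bind₁]
  simp [Matrix.toMvPolynomial_eval_eq_apply]

end CommSemiring

section Field

variable {k σ : Type*} [Field k] {F : MvPolynomial σ k} {d : ℕ}

theorem irreducible_of_isHomogeneous_one {p : MvPolynomial σ k} (hp : p.IsHomogeneous 1)
    (hp0 : p ≠ 0) : Irreducible p := by
  refine irreducible_of_totalDegree_eq_one (hp.totalDegree hp0) fun x hx => ?_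
  obtain ⟨m, hm⟩ := ne_zero_iff.mp hp0
  exact isUnit_iff_ne_zero.mpr (ne_zero_of_dvd_ne_zero hm (hx m))

theorem not_dvd_of_linearIndependent {p q : MvPolynomial σ k} (hp : p.IsHomogeneous 1)
    (hq : q.IsHomogeneous 1) (h : LinearIndependent k ![p, q]) : ¬ p ∣ q := by
  rintro ⟨r, rfl⟩
  have hpr : p * r ≠ 0 := by simpa using h.ne_zero 1
  have hr : r.totalDegree = 0 := by
    have := hq.totalDegree hpr
    rw [totalDegree_mul_of_isDomain (left_ne_zero_of_mul hpr) (right_ne_zero_of_mul hpr),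
      hp.totalDegree (left_ne_zero_of_mul hpr)] at this
    omega
  rw [totalDegree_eq_zero_iff_eq_C.mp hr] at h
  have := LinearIndependent.pair_iff.mp h (coeff 0 r) (-1) (by rw [mul_comm, C_mul']; simp)
  simp at this

theorem dvd_of_forall_eval_eq_zero [IsAlgClosed k] [Finite σ] {p : MvPolynomial σ k}
    (hp : Prime p) (hF : ∀ x, eval x p = 0 → eval x F = 0) : p ∣ F := by
  have := (Ideal.span_singleton_prime hp.ne_zero).mpr hp
  rw [← Ideal.mem_span_singleton, ← IsPrime.vanishingIdeal_zeroLocus (K := k) (Ideal.span {p})]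
  intro x hx
  simp only [mem_zeroLocus_iff] at *
  exact hF x (hx p (Ideal.mem_span_singleton_self p))

theorem eq_zero_of_pairwise_not_dvd_of_totalDegree_lt {ι : Type*} [Fintype ι]
    {p : ι → MvPolynomial σ k} (hp : ∀ i, (p i).IsHomogeneous 1) (hp0 : ∀ i, p i ≠ 0)
    (hpp : Pairwise fun i j => ¬ p i ∣ p j) (hF : ∀ i, p i ∣ F)
    (hdeg : F.totalDegree < Fintype.card ι) : F = 0 := by
  by_contra hF0
  obtain ⟨G, rfl⟩ := Fintype.prod_dvd_of_isRelPrime (fun i j hij =>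
    (irreducible_of_isHomogeneous_one (hp i) (hp0 i)).isRelPrime_iff_not_dvd.mpr (hpp hij)) hF
  have hprod : (∏ i, p i).IsHomogeneous (Fintype.card ι) := by
    simpa using IsHomogeneous.prod Finset.univ p (fun _ => 1) fun i _ => hp i
  have hprod0 : ∏ i, p i ≠ 0 := Finset.prod_ne_zero_iff.mpr fun i _ => hp0 i
  rw [totalDegree_mul_of_isDomain hprod0 (right_ne_zero_of_mul hF0),
    hprod.totalDegree hprod0] at hdeg
  omega

theorem IsHomogeneous.eq_zero_of_eval_eq_zero_fin_two [IsAlgClosed k]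
    {g : MvPolynomial (Fin 2) k} (hg : g.IsHomogeneous d) {ι : Type*} [Fintype ι]
    {u : ι → Fin 2 → k} (hu0 : ∀ i, u i ≠ 0)
    (hu : Pairwise fun i j => LinearIndependent k ![u i, u j]) (hgu : ∀ i, eval (u i) g = 0)
    (hd : d < Fintype.card ι) : g = 0 := by
  let p : ι → MvPolynomial (Fin 2) k := fun i => C (u i 1) * X 0 - C (u i 0) * X 1
  have hp_eval : ∀ i x, eval x (p i) = (Matrix.of ![x, u i]).det := fun i x => by
    simp [p, Matrix.det_fin_two]
    ring
  have hp : ∀ i, (p i).IsHomogeneous 1 := fun i =>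
    (isHomogeneous_C_mul_X _ _).sub (isHomogeneous_C_mul_X _ _)
  have hp0 : ∀ i, p i ≠ 0 := fun i hi => hu0 i <| by
    have h₀ := congrArg (eval ![0, 1]) hi
    have h₁ := congrArg (eval ![1, 0]) hi
    simp only [hp_eval, map_zero, Matrix.det_fin_two] at h₀ h₁
    ext m; fin_cases m <;> simp_all
  have hpg : ∀ i, p i ∣ g := fun i =>
    dvd_of_forall_eval_eq_zero (irreducible_of_isHomogeneous_one (hp i) (hp0 i)).prime
      fun x hx => by
        obtain ⟨a, rfl⟩ := exists_smul_eq_of_det_eq_zero (hu0 i) ((hp_eval i x).symm.trans hx)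
        rw [hg.eval_smul, hgu, mul_zero]
  have hpp : Pairwise fun i j => ¬ p i ∣ p j := fun i j hij ⟨r, hr⟩ => by
    have hii : eval (u i) (p i) = 0 := by
      rw [hp_eval]
      exact Matrix.det_zero_of_row_eq (i := 0) (j := 1) (by simp) rfl
    have := congrArg (eval (u i)) hr
    rw [eval_mul, hii, zero_mul, hp_eval] at this
    exact linearIndependent_iff_det_ne_zero.mp (hu hij) this
  exact eq_zero_of_pairwise_not_dvd_of_totalDegree_lt hp hp0 hpp hpg
    (hg.totalDegree_le.trans_lt hd)

theorem IsHomogeneous.eval_eq_zero_of_finrank_eq_two [IsAlgClosed k]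
    {W : Submodule k (σ → k)} (hW : Module.finrank k W = 2) (hF : F.IsHomogeneous d)
    {ι : Type*} [Fintype ι] {q : ι → σ → k} (hqW : ∀ i, q i ∈ W) (hq0 : ∀ i, q i ≠ 0)
    (hq : Pairwise fun i j => LinearIndependent k ![q i, q j]) (hFq : ∀ i, eval (q i) F = 0)
    (hd : d < Fintype.card ι) {x : σ → k} (hx : x ∈ W) : eval x F = 0 := by
  have : Module.Finite k W := Module.finite_of_finrank_eq_succ hW
  let e : (Fin 2 → k) ≃ₗ[k] W := LinearEquiv.ofFinrankEq _ _ (by rw [hW]; simp)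
  let φ : (Fin 2 → k) →ₗ[k] σ → k := W.subtype ∘ₗ e.toLinearMap
  have hφ : ∀ y : W, φ (e.symm y) = y := fun y => by simp [φ]
  obtain ⟨g, hg, hgF⟩ := hF.exists_eval_eq_eval_linearMap φ
  let u : ι → Fin 2 → k := fun i => e.symm ⟨q i, hqW i⟩
  have hφu : ∀ i, φ (u i) = q i := fun i => hφ _
  have hg0 : g = 0 := by
    refine hg.eq_zero_of_eval_eq_zero_fin_two (u := u) (fun i hi => hq0 i ?_)
      (fun i j hij => LinearIndependent.of_comp φ ?_) (fun i => by rw [hgF, hφu, hFq]) hd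
    · rw [← hφu, hi, map_zero]
    · have hφuu : ⇑φ ∘ ![u i, u j] = ![φ (u i), φ (u j)] := (FinVec.map_eq _ _).symm
      rw [hφuu, hφu, hφu]
      exact hq hij
  simpa [hφ, hg0] using (hgF (e.symm ⟨x, hx⟩)).symm

end Field

end MvPolynomial

theorem dvd_of_mem_vanishingIdeal_starCone {k : Type*} [Field k] [IsAlgClosed k] {l d : ℕ}
    {L : Fin l → MvPolynomial (Fin 3) k} (hhom : ∀ i, (L i).IsHomogeneous 1)
    (h2 : ∀ a b : Fin l, a ≠ b → LinearIndependent k ![L a, L b])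
    (h3 : ∀ a b c : Fin l, a ≠ b → a ≠ c → b ≠ c → LinearIndependent k ![L a, L b, L c])
    {F : MvPolynomial (Fin 3) k} (hF : F.IsHomogeneous d)
    (hFvan : F ∈ vanishingIdealOf (starCone L)) (hd : d < l - 1) {i : Fin l} (hLi : L i ≠ 0) :
    L i ∣ F := by
  choose c hc using fun j => (hhom j).exists_linearCombination_X_eq
  have hLc : ∀ j x, eval x (L j) = c j ⬝ᵥ x := fun j x => by
    rw [← hc, eval_linearCombination_X]
  -- `FinVec.map L ![a, b]` reduces to `![L a, L b]`, so this applies to `h2` and `h3` directly.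
  have hcomp : ∀ {n : ℕ} (v : Fin n → Fin l), LinearIndependent k (FinVec.map L v) →
      LinearIndependent k (FinVec.map c v) := fun v hv => by
    rw [FinVec.map_eq] at hv ⊢
    refine .of_comp (Fintype.linearCombination k (X : Fin 3 → MvPolynomial (Fin 3) k)) ?_
    convert hv using 1
    exact funext fun m => hc (v m)
  have hc2 : ∀ j, j ≠ i → LinearIndependent k ![c i, c j] := fun j hj =>
    hcomp ![i, j] (h2 i j hj.symm)
  have hci : c i ≠ 0 := fun h => hLi (by rw [← hc, h, map_zero])
  -- The points of `𝕏(l)` on the line `L i = 0`.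
  let q : {j // j ≠ i} → Fin 3 → k := fun j => c i ⨯₃ c j
  refine dvd_of_forall_eval_eq_zero (irreducible_of_isHomogeneous_one (hhom i) hLi).prime
    fun x hx => hF.eval_eq_zero_of_finrank_eq_two
      (W := LinearMap.ker (dotProductEquiv k (Fin 3) (c i))) ?_ (q := q) (fun j => ?_)
      (fun j => ?_) (fun j j' hjj' => ?_) (fun j => ?_) (by simpa using hd) ?_
  · have := Module.Dual.finrank_ker_add_one_of_ne_zero
      ((dotProductEquiv k (Fin 3)).map_ne_zero_iff.mpr hci)
    rw [Module.finrank_fin_fun] at this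
    omega
  · simp [q, dot_self_cross]
  · exact crossProduct_ne_zero_iff_linearIndependent.mpr (hc2 j j.2)
  · exact linearIndependent_cross_cross (hcomp ![i, j, j'] (h3 i j j' j.2.symm j'.2.symm
      (Subtype.val_injective.ne hjj')))
  · exact hFvan (q j) ⟨crossProduct_ne_zero_iff_linearIndependent.mpr (hc2 j j.2), i, j,
      j.2.symm, by rw [hLc, dot_self_cross], by rw [hLc, dot_cross_self]⟩
  · simpa [hLc] using hx

theorem no_small_degree_curve_contains_star_general {k : Type*} [Field k] [IsAlgClosed k]
    (l d : ℕ) (L : Fin l → MvPolynomial (Fin 3) k)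
    (hhom : ∀ i, (L i).IsHomogeneous 1)
    (h2 : ∀ a b : Fin l, a ≠ b → LinearIndependent k ![L a, L b])
    (h3 : ∀ a b c : Fin l, a ≠ b → a ≠ c → b ≠ c → LinearIndependent k ![L a, L b, L c])
    (F : MvPolynomial (Fin 3) k) (hF : F.IsHomogeneous d)
    (hFvan : F ∈ vanishingIdealOf (starCone L)) (hd : d < l - 1) :
    (∀ i : Fin l, L i ∣ F) ∧ F = 0 := by
  have hL0 : ∀ i, L i ≠ 0 := fun i => by
    obtain ⟨j, hj⟩ := Fintype.exists_ne_of_one_lt_card (by simp; omega) i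
    simpa using (h2 i j hj.symm).ne_zero 0
  have hdvd : ∀ i, L i ∣ F := fun i =>
    dvd_of_mem_vanishingIdeal_starCone hhom h2 h3 hF hFvan hd (hL0 i)
  refine ⟨hdvd, eq_zero_of_pairwise_not_dvd_of_totalDegree_lt hhom hL0
    (fun a b hab => not_dvd_of_linearIndependent (hhom a) (hhom b) (h2 a b hab)) hdvd ?_⟩
  simpa using hF.totalDegree_le.trans_lt (by omega : d < l)

/-- If a homogeneous form `F` of degree `d` vanishes on the star
configuration `𝕏(l)` and `d < l − 1`, then `F` is divisible by each of the `l` linear forms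
`L_i`; consequently `F = 0`: no nonzero curve of degree `d < l − 1` contains `𝕏(l)`. -/
theorem no_small_degree_curve_contains_star {k : Type*} [Field k] [IsAlgClosed k]
    (l d : ℕ) (hl : 2 ≤ l) (L : Fin l → MvPolynomial (Fin 3) k)
    (hhom : ∀ i, (L i).IsHomogeneous 1)
    (h2 : ∀ a b : Fin l, a ≠ b → LinearIndependent k ![L a, L b])
    (h3 : ∀ a b c : Fin l, a ≠ b → a ≠ c → b ≠ c → LinearIndependent k ![L a, L b, L c])
    (F : MvPolynomial (Fin 3) k) (hF : F.IsHomogeneous d)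
    (hFvan : F ∈ vanishingIdealOf (starCone L)) (hd : d < l - 1) :
    (∀ i : Fin l, L i ∣ F) ∧ F = 0 :=
  no_small_degree_curve_contains_star_general l d L hhom h2 h3 F hF hFvan hd
end

section
/- Let L₁,…,L_l be three-wise linearly independent linear forms in S = k[x₀,x₁,x₂] with l ≥ 2, let L̂_i = ∏_{j≠i} L_j, and let I_{𝕏(l)} be the vanishing ideal of the star configuration 𝕏(l). Then I_{𝕏(l)} = (L̂₁, L̂₂, …, L̂_l). -/
open MvPolynomial Finset

/-!
Induct on `l`, splitting off `M = L_l`. The substitution `x ↦ x - M(x) w` with `M(w) = 1` is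
the identity modulo `M` and, on points, projects onto the plane `M = 0`. After it, a polynomial
`F` vanishing on `𝕏(l)` vanishes on each plane `L_i - L_i(w) M = 0` (`i < l`); these are
pairwise non-proportional linear forms, hence pairwise coprime primes, so their product divides
it. Their product is `L̂_l` modulo `M`, whence `F = L̂_l G + M H`. As `M` does not vanish at the
points of `𝕏(l - 1)` (three-wise independence), `H` vanishes there, so by induction `H` lies in
the ideal of the `L̂_i` of the smaller configuration, and `M` times those are the `L̂_i`, `i < l`.
The origin needs separate care: `F` vanishes at `0` because it vanishes on a punctured line.
-/

namespace MvPolynomial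

namespace IsHomogeneous

section Linear

variable {σ R A : Type*} [CommSemiring R] [CommSemiring A] [Algebra R A] {L : MvPolynomial σ R}

theorem mem_span_X (hL : L.IsHomogeneous 1) : L ∈ Submodule.span R (Set.range X) := by
  rw [← homogeneousSubmodule_one_eq_span_X]
  exact hL

theorem aeval_add (hL : L.IsHomogeneous 1) (f g : σ → A) :
    MvPolynomial.aeval (f + g) L = MvPolynomial.aeval f L + MvPolynomial.aeval g L := by
  replace hL := hL.mem_span_X
  induction hL using Submodule.span_induction with
  | mem _ h => obtain ⟨i, rfl⟩ := h; simp
  | zero => simp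
  | add _ _ _ _ h₁ h₂ => rw [map_add, map_add, map_add, h₁, h₂]; ring
  | smul _ _ _ h => rw [map_smul, map_smul, map_smul, h, smul_add]

theorem aeval_smul (hL : L.IsHomogeneous 1) (a : A) (f : σ → A) :
    MvPolynomial.aeval (a • f) L = a * MvPolynomial.aeval f L := by
  replace hL := hL.mem_span_X
  induction hL using Submodule.span_induction with
  | mem _ h => obtain ⟨i, rfl⟩ := h; simp
  | zero => simp
  | add _ _ _ _ h₁ h₂ => rw [map_add, map_add, h₁, h₂, mul_add]
  | smul _ _ _ h => rw [map_smul, map_smul, h, mul_smul_comm]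

end Linear

variable {σ k : Type*} [Field k] {M : MvPolynomial σ k}

theorem eval_add (hM : M.IsHomogeneous 1) (v w : σ → k) :
    eval (v + w) M = eval v M + eval w M := by
  simpa only [aeval_eq_eval] using hM.aeval_add v w

theorem eval_smul_s5 (hM : M.IsHomogeneous 1) (t : k) (v : σ → k) :
    eval (t • v) M = t * eval v M := by
  simpa only [aeval_eq_eval] using hM.aeval_smul t v

theorem eval_sub (hM : M.IsHomogeneous 1) (v w : σ → k) :
    eval (v - w) M = eval v M - eval w M := by
  rw [eq_sub_iff_add_eq, ← hM.eval_add, sub_add_cancel]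

theorem exists_eval_eq_one [Infinite k] (hM : M.IsHomogeneous 1) (h0 : M ≠ 0) :
    ∃ w, eval w M = 1 := by
  obtain ⟨v, hv⟩ : ∃ v, eval v M ≠ 0 := by
    by_contra! h
    exact h0 (MvPolynomial.funext fun v => by simp [h v])
  exact ⟨(eval v M)⁻¹ • v, by rw [hM.eval_smul_s5, inv_mul_cancel₀ hv]⟩

end IsHomogeneous

section Projection

variable {σ R : Type*} [CommRing R]

noncomputable def projAlong (M : MvPolynomial σ R) (w : σ → R) :
    MvPolynomial σ R →ₐ[R] MvPolynomial σ R :=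
  aeval fun j => X j - C (w j) * M

variable {M : MvPolynomial σ R} {w : σ → R}

theorem eval_projAlong (F : MvPolynomial σ R) (v : σ → R) :
    eval v (projAlong M w F) = eval (v - eval v M • w) F := by
  change aeval v (aeval _ F) = aeval _ F
  rw [← AlgHom.comp_apply, comp_aeval]
  congr 2
  funext j
  simp [mul_comm]

theorem mk_projAlong (F : MvPolynomial σ R) :
    Ideal.Quotient.mk (Ideal.span {M}) (projAlong M w F) = Ideal.Quotient.mk _ F := by
  rw [← Ideal.Quotient.mkₐ_eq_mk R, projAlong, ← AlgHom.comp_apply, comp_aeval]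
  conv_rhs => rw [← aeval_X_left_apply F, ← AlgHom.comp_apply, comp_aeval]
  congr 2
  funext j
  simp

theorem projAlong_of_isHomogeneous {L : MvPolynomial σ R} (hL : L.IsHomogeneous 1) :
    projAlong M w L = L - C (eval w L) * M := by
  have : (fun j => X j - C (w j) * M) = X - M • (C ∘ w) := by
    funext j
    simp [mul_comm]
  rw [projAlong, this, sub_eq_add_neg, hL.aeval_add, ← neg_smul, hL.aeval_smul,
    aeval_C_comp_left, aeval_X_left_apply, aeval_eq_eval]
  ring

theorem ker_projAlong (hM : M.IsHomogeneous 1) (hw : eval w M = 1) :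
    RingHom.ker (projAlong M w) = Ideal.span {M} := by
  apply le_antisymm
  · intro F hF
    rw [← Ideal.Quotient.eq_zero_iff_mem, ← mk_projAlong (w := w), RingHom.mem_ker.1 hF,
      map_zero]
  · rw [Ideal.span_le, Set.singleton_subset_iff, SetLike.mem_coe, RingHom.mem_ker,
      projAlong_of_isHomogeneous hM, hw, C_1, one_mul, sub_self]

theorem IsHomogeneous.projAlong {L : MvPolynomial σ R} (hM : M.IsHomogeneous 1)
    (hL : L.IsHomogeneous 1) : (projAlong M w L).IsHomogeneous 1 :=
  projAlong_of_isHomogeneous hL ▸ hL.sub (hM.C_mul _)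

theorem projAlong_ne_zero {k : Type*} [Field k] {M N : MvPolynomial σ k} {w : σ → k}
    (hN : N.IsHomogeneous 1) (hind : LinearIndependent k ![N, M]) : projAlong M w N ≠ 0 := by
  intro h
  rw [projAlong_of_isHomogeneous hN, sub_eq_zero, ← smul_eq_C_mul] at h
  have := LinearIndependent.pair_iff.1 hind 1 (-eval w N) (by
    rw [one_smul, neg_smul, ← sub_eq_add_neg]
    exact sub_eq_zero.2 h)
  exact one_ne_zero this.1

end Projection

section InfiniteField

variable {σ k : Type*} [Field k] [Infinite k] {M : MvPolynomial σ k}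

theorem IsHomogeneous.prime (hM : M.IsHomogeneous 1) (h0 : M ≠ 0) : Prime M := by
  obtain ⟨w, hw⟩ := hM.exists_eval_eq_one h0
  rw [← Ideal.span_singleton_prime h0, ← ker_projAlong hM hw]
  exact RingHom.ker_isPrime _

theorem IsHomogeneous.dvd_of_forall_eval_eq_zero (hM : M.IsHomogeneous 1) (h0 : M ≠ 0)
    {F : MvPolynomial σ k} (hF : ∀ v, eval v M = 0 → eval v F = 0) : M ∣ F := by
  obtain ⟨w, hw⟩ := hM.exists_eval_eq_one h0
  rw [← Ideal.mem_span_singleton, ← ker_projAlong hM hw, RingHom.mem_ker]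
  refine MvPolynomial.funext fun v => ?_
  rw [eval_projAlong, map_zero]
  exact hF _ (by rw [hM.eval_sub, hM.eval_smul_s5, hw, mul_one, sub_self])

theorem eval_zero_eq_zero_of_forall_smul {F : MvPolynomial σ k} (u : σ → k)
    (hF : ∀ t : k, t ≠ 0 → eval (t • u) F = 0) : eval 0 F = 0 := by
  set q : Polynomial k := aeval (fun j => Polynomial.C (u j) * Polynomial.X) F
  have hq : ∀ t, q.eval t = eval (t • u) F := by
    intro t
    change Polynomial.aeval t q = aeval _ F
    rw [← AlgHom.comp_apply, comp_aeval]
    congr 2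
    funext j
    rw [map_mul, Polynomial.aeval_C, Polynomial.aeval_X, Pi.smul_apply, smul_eq_mul, mul_comm]
    rfl
  have : q = 0 := Polynomial.eq_zero_of_infinite_isRoot q <|
    (Set.finite_singleton 0).infinite_compl.mono fun t ht => (hq t).trans (hF t ht)
  simpa [this] using (hq 0).symm

end InfiniteField

section LinearAlgebra

variable {σ ι k : Type*} [Fintype σ] [Fintype ι] [Field k] {L : ι → MvPolynomial σ k}

theorem exists_ne_zero_forall_eval_eq_zero (hL : ∀ i, (L i).IsHomogeneous 1)
    (hcard : Fintype.card ι < Fintype.card σ) : ∃ v ≠ 0, ∀ i, eval v (L i) = 0 := by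
  let φ : (σ → k) →ₗ[k] ι → k :=
    { toFun := fun v i => eval v (L i)
      map_add' := fun v w => by ext i; exact (hL i).eval_add v w
      map_smul' := fun t v => by ext i; exact (hL i).eval_smul_s5 t v }
  obtain ⟨v, hv, hv0⟩ := Submodule.exists_mem_ne_zero_of_ne_bot
    (LinearMap.ker_ne_bot_of_finrank_lt (f := φ) (by simpa using hcard))
  exact ⟨v, hv0, fun i => congrFun (LinearMap.mem_ker.1 hv) i⟩

theorem eq_zero_of_forall_eval_eq_zero_of_linearIndependent (hL : ∀ i, (L i).IsHomogeneous 1)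
    (hind : LinearIndependent k L) (hcard : Fintype.card σ ≤ Fintype.card ι) {v : σ → k}
    (hv : ∀ i, eval v (L i) = 0) : v = 0 := by
  have hspan : Submodule.span k (Set.range L) = Submodule.span k (Set.range X) := by
    have := FiniteDimensional.span_of_finite k (Set.finite_range (X : σ → MvPolynomial σ k))
    apply Submodule.eq_of_le_of_finrank_le
    · exact Submodule.span_le.2 (Set.range_subset_iff.2 fun i => (hL i).mem_span_X)
    · rw [finrank_span_eq_card hind]
      exact (finrank_range_le_card _).trans hcard
  have hker : Submodule.span k (Set.range L) ≤ LinearMap.ker (aeval v).toLinearMap :=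
    Submodule.span_le.2 (Set.range_subset_iff.2 hv)
  funext j
  have hX : X j ∈ Submodule.span k (Set.range L) := hspan ▸ Submodule.subset_span ⟨j, rfl⟩
  simpa using hker hX

end LinearAlgebra

end MvPolynomial

section Lhat

variable {R : Type*}

def Lhat [CommMonoid R] {l : ℕ} (L : Fin l → R) (i : Fin l) : R :=
  ∏ j ∈ univ.erase i, L j

variable {n : ℕ}

theorem Lhat_last [CommMonoid R] (L : Fin (n + 1) → R) :
    Lhat L (Fin.last n) = ∏ i : Fin n, L i.castSucc := by
  rw [Lhat, ← filter_ne', prod_filter, Fin.prod_univ_castSucc]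
  simp [(Fin.castSucc_lt_last _).ne]

theorem Lhat_castSucc [CommMonoid R] (L : Fin (n + 1) → R) (i : Fin n) :
    Lhat L i.castSucc = Lhat (fun j => L j.castSucc) i * L (Fin.last n) := by
  rw [Lhat, Lhat, ← filter_ne', ← filter_ne', prod_filter, prod_filter, Fin.prod_univ_castSucc]
  simp [(Fin.castSucc_lt_last i).ne']

theorem last_mul_mem_span_Lhat [CommRing R] (L : Fin (n + 1) → R) {H : R}
    (hH : H ∈ Ideal.span (Set.range (Lhat fun j => L j.castSucc))) :
    L (Fin.last n) * H ∈ Ideal.span (Set.range (Lhat L)) := by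
  obtain ⟨c, rfl⟩ := Ideal.mem_span_range_iff_exists_fun.1 hH
  rw [mul_sum]
  refine sum_mem fun i _ => ?_
  rw [mul_left_comm, mul_comm (L _), ← Lhat_castSucc]
  exact Ideal.mul_mem_left _ _ (Ideal.subset_span ⟨i.castSucc, rfl⟩)

end Lhat

section StarConfiguration

variable {k : Type*} [Field k]

theorem span_Lhat_le_vanishingIdealOf {l : ℕ} (L : Fin l → MvPolynomial (Fin 3) k) :
    Ideal.span (Set.range (Lhat L)) ≤ vanishingIdealOf (starCone L) := by
  rw [Ideal.span_le]
  rintro _ ⟨i, rfl⟩ v ⟨-, a, b, hab, ha, hb⟩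
  obtain ⟨c, hci, hc⟩ : ∃ c, c ≠ i ∧ eval v (L c) = 0 := by
    by_cases hai : a = i
    · exact ⟨b, hai ▸ hab.symm, hb⟩
    · exact ⟨a, hai, ha⟩
  rw [Lhat, eval_prod]
  exact prod_eq_zero (mem_erase.2 ⟨hci, mem_univ c⟩) hc

theorem mem_vanishingIdealOf_starCone_castSucc {m : ℕ}
    {L : Fin (m + 1) → MvPolynomial (Fin 3) k} (hL : ∀ i, (L i).IsHomogeneous 1)
    (h3 : ∀ a b c, a ≠ b → a ≠ c → b ≠ c → LinearIndependent k ![L a, L b, L c])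
    {G H : MvPolynomial (Fin 3) k}
    (hF : Lhat L (Fin.last m) * G + L (Fin.last m) * H ∈ vanishingIdealOf (starCone L)) :
    H ∈ vanishingIdealOf (starCone fun i => L i.castSucc) := by
  rintro v ⟨hv0, a, b, hab, ha, hb⟩
  have hab' : a.castSucc ≠ b.castSucc := (Fin.castSucc_injective m).ne hab
  have hMv : eval v (L (Fin.last m)) ≠ 0 := fun hM =>
    hv0 <| eq_zero_of_forall_eval_eq_zero_of_linearIndependent
      (L := ![L a.castSucc, L b.castSucc, L (Fin.last m)]) (fun i => by fin_cases i <;> exact hL _)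
      (h3 _ _ _ hab' (Fin.castSucc_lt_last a).ne (Fin.castSucc_lt_last b).ne) (by simp)
      (by simp [Fin.forall_fin_succ, ha, hb, hM])
  have hFv := hF v ⟨hv0, _, _, hab', ha, hb⟩
  rw [map_add, map_mul, map_mul, Lhat_last, eval_prod, prod_eq_zero (mem_univ a) ha, zero_mul,
    zero_add] at hFv
  exact (mul_eq_zero.1 hFv).resolve_left hMv

variable [Infinite k]

theorem eval_eq_zero_of_mem_vanishingIdealOf_starCone {l : ℕ}
    {L : Fin l → MvPolynomial (Fin 3) k} (hL : ∀ i, (L i).IsHomogeneous 1)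
    {F : MvPolynomial (Fin 3) k} (hF : F ∈ vanishingIdealOf (starCone L)) {a b : Fin l}
    (hab : a ≠ b) {v : Fin 3 → k} (ha : eval v (L a) = 0) (hb : eval v (L b) = 0) :
    eval v F = 0 := by
  by_cases hv : v = 0
  · obtain ⟨u, hu0, hu⟩ := exists_ne_zero_forall_eval_eq_zero (L := ![L a, L b])
      (by simp [Fin.forall_fin_two, hL]) (by simp)
    obtain ⟨hua, hub⟩ : eval u (L a) = 0 ∧ eval u (L b) = 0 := ⟨hu 0, hu 1⟩
    subst hv
    refine eval_zero_eq_zero_of_forall_smul u fun t ht =>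
      hF _ ⟨smul_ne_zero ht hu0, a, b, hab, ?_, ?_⟩
    · rw [(hL a).eval_smul_s5, hua, mul_zero]
    · rw [(hL b).eval_smul_s5, hub, mul_zero]
  · exact hF v ⟨hv, a, b, hab, ha, hb⟩

variable {M N N' : MvPolynomial (Fin 3) k} {w : Fin 3 → k}

theorem isRelPrime_projAlong (hM : M.IsHomogeneous 1) (hN : N.IsHomogeneous 1)
    (hN' : N'.IsHomogeneous 1) (h0 : projAlong M w N ≠ 0)
    (hind : LinearIndependent k ![N, N', M]) :
    IsRelPrime (projAlong M w N) (projAlong M w N') := by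
  refine ((hM.projAlong hN).prime h0).irreducible.isRelPrime_iff_not_dvd.2 ?_
  rintro ⟨q, hq⟩
  obtain ⟨v, hv0, hv⟩ := exists_ne_zero_forall_eval_eq_zero (L := ![N, M])
    (by simp [Fin.forall_fin_two, hN, hM]) (by simp)
  obtain ⟨hvN, hvM⟩ : eval v N = 0 ∧ eval v M = 0 := ⟨hv 0, hv 1⟩
  have hvN' : eval v N' = 0 := by
    simpa [projAlong_of_isHomogeneous, hN, hN', hvN, hvM] using congrArg (eval v) hq
  refine hv0 (eq_zero_of_forall_eval_eq_zero_of_linearIndependent (L := ![N, N', M])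
    (by simp [Fin.forall_fin_succ, hN, hN', hM]) hind (by simp) ?_)
  simp [Fin.forall_fin_succ, hvN, hvN', hvM]

theorem exists_eq_prod_mul_add_mul {m : ℕ} {N : Fin m → MvPolynomial (Fin 3) k}
    (hM : M.IsHomogeneous 1) (hM0 : M ≠ 0) (hN : ∀ i, (N i).IsHomogeneous 1)
    (h2 : ∀ i, LinearIndependent k ![N i, M])
    (h3 : ∀ i j, i ≠ j → LinearIndependent k ![N i, N j, M]) {F : MvPolynomial (Fin 3) k}
    (hF : ∀ i v, eval v M = 0 → eval v (N i) = 0 → eval v F = 0) :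
    ∃ G H, F = (∏ i, N i) * G + M * H := by
  obtain ⟨w, hw⟩ := hM.exists_eval_eq_one hM0
  have hdvd : ∀ i, projAlong M w (N i) ∣ projAlong M w F := fun i =>
    (hM.projAlong (hN i)).dvd_of_forall_eval_eq_zero (projAlong_ne_zero (hN i) (h2 i))
      fun v hv => by
        rw [eval_projAlong]
        refine hF i _ ?_ ((eval_projAlong _ v).symm.trans hv)
        rw [hM.eval_sub, hM.eval_smul_s5, hw, mul_one, sub_self]
  obtain ⟨G, hG⟩ := Fintype.prod_dvd_of_isRelPrime (fun i j hij =>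
    isRelPrime_projAlong hM (hN i) (hN j) (projAlong_ne_zero (hN i) (h2 i)) (h3 i j hij)) hdvd
  have hmk : Ideal.Quotient.mk (Ideal.span {M}) F = Ideal.Quotient.mk _ ((∏ i, N i) * G) := by
    rw [← mk_projAlong (w := w), hG, ← map_prod, map_mul, map_mul, mk_projAlong]
  obtain ⟨H, hH⟩ := Ideal.mem_span_singleton'.1 (Ideal.Quotient.eq.1 hmk)
  exact ⟨G, H, by linear_combination -hH⟩

theorem vanishingIdealOf_starCone_le_span_Lhat (m : ℕ)
    (L : Fin (m + 1) → MvPolynomial (Fin 3) k) (hL : ∀ i, (L i).IsHomogeneous 1)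
    (h2 : ∀ a b, a ≠ b → LinearIndependent k ![L a, L b])
    (h3 : ∀ a b c, a ≠ b → a ≠ c → b ≠ c → LinearIndependent k ![L a, L b, L c]) :
    vanishingIdealOf (starCone L) ≤ Ideal.span (Set.range (Lhat L)) := by
  induction m with
  | zero =>
    have h1 : (1 : MvPolynomial (Fin 3) k) ∈ Ideal.span (Set.range (Lhat L)) :=
      Ideal.subset_span ⟨0, by simp [Lhat]⟩
    rw [(Ideal.eq_top_iff_one _).2 h1]
    exact le_top
  | succ m ih =>
    intro F hF
    have hinj := Fin.castSucc_injective (m + 1)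
    have hlast : ∀ i : Fin (m + 1), i.castSucc ≠ Fin.last _ := fun i =>
      (Fin.castSucc_lt_last i).ne
    obtain ⟨G, H, rfl⟩ := exists_eq_prod_mul_add_mul (N := fun i => L i.castSucc) (hL _)
      (by simpa using (h2 _ _ (hlast 0)).ne_zero 1) (fun i => hL _) (fun i => h2 _ _ (hlast i))
      (fun i j hij => h3 _ _ _ (hinj.ne hij) (hlast i) (hlast j))
      (fun i v hM hN => eval_eq_zero_of_mem_vanishingIdealOf_starCone hL hF (hlast i) hN hM)
    rw [← Lhat_last] at hF ⊢
    refine add_mem (Ideal.mul_mem_right _ _ (Ideal.subset_span ⟨_, rfl⟩))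
      (last_mul_mem_span_Lhat L (ih _ (fun i => hL _) (fun a b hab => h2 _ _ (hinj.ne hab))
        (fun a b c hab hac hbc => h3 _ _ _ (hinj.ne hab) (hinj.ne hac) (hinj.ne hbc))
        (mem_vanishingIdealOf_starCone_castSucc hL h3 hF)))

end StarConfiguration

/-- For three-wise linearly independent linear forms `L₁,…,L_l` (`l ≥ 2`)
over an algebraically closed field, the vanishing ideal of the star configuration `𝕏(l)` is
generated by the products `L̂_i = ∏_{j ≠ i} L_j`. -/
theorem vanishingIdeal_eq_span_Lhat {k : Type*} [Field k] [IsAlgClosed k]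
    (l : ℕ) (hl : 2 ≤ l) (L : Fin l → MvPolynomial (Fin 3) k)
    (hhom : ∀ i, (L i).IsHomogeneous 1)
    (h2 : ∀ a b : Fin l, a ≠ b → LinearIndependent k ![L a, L b])
    (h3 : ∀ a b c : Fin l, a ≠ b → a ≠ c → b ≠ c → LinearIndependent k ![L a, L b, L c]) :
    vanishingIdealOf (starCone L) =
      Ideal.span (Set.range fun i : Fin l => ∏ j ∈ univ.erase i, L j) := by
  obtain ⟨m, rfl⟩ : ∃ m, l = m + 1 := ⟨l - 1, by omega⟩
  exact le_antisymm (vanishingIdealOf_starCone_le_span_Lhat m L hhom h2 h3)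
    (span_Lhat_le_vanishingIdealOf L)
end
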